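/- arXiv:1803.06146 — 4 statements merged into one kernel-verified Lean document; each statement's English description precedes it below -/
import Mathlib

section
/- Let n ≥ 1, let c ∈ (0,1), and let Q be an n×n real substochastic matrix. Let R be the graph-normalized PageRank vector and R^{(N)} its N-th finite approximation. Then for every N ∈ ℕ and every ε > 0, the fraction of indices with large truncation error satisfies (1/n)·#{i ∈ [n] : R_i − R^{(N)}_i ≥ ε} ≤ c^{N+1}/ε; equivalently, for a uniformly chosen vertex V_n, P(|R_{V_n} − R^{(N)}_{V_n}| ≥ ε) ≤ c^{N+1}/ε. -/
/-!
Iterating `R = c • R Q + (1 - c) 𝟙` gives `R - R^{(N)} = c^{N+1} • R Q^{N+1}`. A substochastic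
matrix does not increase the ℓ¹ norm of a row vector, and the fixed-point equation itself yields
`‖R‖₁ ≤ n`, so the total truncation error is at most `c^{N+1} n`; Markov's inequality for the
counting measure finishes the proof.
-/

open Finset Matrix

section SubstochasticL1

variable {ι : Type*} [Fintype ι] {Q : Matrix ι ι ℝ}

theorem sum_abs_vecMul_le (hQ0 : ∀ j i, 0 ≤ Q j i) (hQ1 : ∀ j, ∑ i, Q j i ≤ 1) (v : ι → ℝ) :
    ∑ i, |(v ᵥ* Q) i| ≤ ∑ j, |v j| :=
  calc ∑ i, |(v ᵥ* Q) i| ≤ ∑ i, ∑ j, |v j| * Q j i := by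
        gcongr with i
        refine (abs_sum_le_sum_abs _ _).trans_eq (sum_congr rfl fun j _ => ?_)
        rw [abs_mul, abs_of_nonneg (hQ0 j i)]
    _ = ∑ j, |v j| * ∑ i, Q j i := by rw [sum_comm]; simp only [mul_sum]
    _ ≤ ∑ j, |v j| := by
        gcongr with j
        exact mul_le_of_le_one_right (abs_nonneg _) (hQ1 j)

theorem sum_abs_vecMul_pow_le [DecidableEq ι] (hQ0 : ∀ j i, 0 ≤ Q j i)
    (hQ1 : ∀ j, ∑ i, Q j i ≤ 1) (v : ι → ℝ) (k : ℕ) : ∑ i, |(v ᵥ* Q ^ k) i| ≤ ∑ j, |v j| := by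
  induction k with
  | zero => simp
  | succ k ih =>
    rw [pow_succ, ← vecMul_vecMul]
    exact (sum_abs_vecMul_le hQ0 hQ1 _).trans ih

theorem one_sub_mul_sum_abs_le_of_eq_smul_vecMul_add (hQ0 : ∀ j i, 0 ≤ Q j i)
    (hQ1 : ∀ j, ∑ i, Q j i ≤ 1) {c : ℝ} (hc : 0 ≤ c) {R b : ι → ℝ}
    (hR : R = c • (R ᵥ* Q) + b) : (1 - c) * ∑ i, |R i| ≤ ∑ i, |b i| := by
  have hle : ∑ i, |R i| ≤ c * ∑ i, |R i| + ∑ i, |b i| :=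
    calc ∑ i, |R i| = ∑ i, |c * (R ᵥ* Q) i + b i| := by
          conv_lhs => rw [hR]
          rfl
      _ ≤ ∑ i, (c * |(R ᵥ* Q) i| + |b i|) := by
          gcongr with i
          exact (abs_add_le _ _).trans_eq (by rw [abs_mul, abs_of_nonneg hc])
      _ ≤ c * ∑ i, |R i| + ∑ i, |b i| := by
          rw [sum_add_distrib, ← mul_sum]
          gcongr ?_ + _
          exact mul_le_mul_of_nonneg_left (sum_abs_vecMul_le hQ0 hQ1 R) hc
  linarith

end SubstochasticL1

theorem sub_sum_range_smul_vecMul_pow {ι R : Type*} [Fintype ι] [DecidableEq ι] [CommRing R]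
    {Q : Matrix ι ι R} {c : R} {x b : ι → R} (hx : x = c • (x ᵥ* Q) + b) (N : ℕ) :
    x - ∑ k ∈ range (N + 1), c ^ k • (b ᵥ* Q ^ k) = c ^ (N + 1) • (x ᵥ* Q ^ (N + 1)) := by
  induction N with
  | zero => simp [sub_eq_iff_eq_add, ← hx]
  | succ N ih =>
    rw [sum_range_succ, ← sub_sub, ih]
    conv_lhs => rw [hx]
    rw [add_vecMul, smul_vecMul, vecMul_vecMul, ← pow_succ', smul_add, smul_smul, ← pow_succ,
      add_sub_cancel_right]

theorem card_filter_le_abs_mul_le_sum_abs {ι : Type*} [Fintype ι] (f : ι → ℝ) (ε : ℝ) :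
    (#{i | ε ≤ |f i|} : ℝ) * ε ≤ ∑ i, |f i| :=
  calc (#{i | ε ≤ |f i|} : ℝ) * ε ≤ ∑ i ∈ {i | ε ≤ |f i|}, |f i| := by
        simpa [nsmul_eq_mul, mul_comm] using
          card_nsmul_le_sum _ _ ε fun i hi => (mem_filter.mp hi).2
    _ ≤ ∑ i, |f i| := sum_le_sum_of_subset_of_nonneg (subset_univ _) fun i _ _ => abs_nonneg _

theorem stmt_6_general (n : ℕ) (c : ℝ) (hc : c ∈ Set.Ioo (0 : ℝ) 1)
    (Q : Matrix (Fin n) (Fin n) ℝ)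
    (hQ0 : ∀ j i, 0 ≤ Q j i) (hQ1 : ∀ j, ∑ i, Q j i ≤ 1)
    (R : Fin n → ℝ)
    (hR : ∀ i, R i = c * (∑ j, Q j i * R j) + (1 - c))
    (RN : ℕ → Fin n → ℝ)
    (hRN : ∀ N i, RN N i =
      (1 - c) * ∑ k ∈ Finset.range (N + 1), c ^ k * ∑ j, (Q ^ k) j i) :
    ∀ (N : ℕ) (ε : ℝ), 0 < ε →
      ((Finset.univ.filter fun i : Fin n => ε ≤ |R i - RN N i|).card : ℝ) / (n : ℝ)
        ≤ c ^ (N + 1) / ε := by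
  intro N ε hε
  obtain ⟨hc0, hc1⟩ := hc
  have hRvec : R = c • (R ᵥ* Q) + (1 - c) • 1 := by
    ext i; simp [hR i, vecMul, dotProduct, mul_comm]
  have hRNvec : RN N = ∑ k ∈ range (N + 1), c ^ k • (((1 - c) • 1) ᵥ* Q ^ k) := by
    ext i; simp [hRN N i, vecMul, dotProduct, mul_sum, mul_left_comm]
  have hRnorm : ∑ i, |R i| ≤ n := by
    have hb : ∑ i, |((1 - c) • (1 : Fin n → ℝ)) i| = n * (1 - c) := by
      simp only [Pi.smul_apply, Pi.one_apply, smul_eq_mul, mul_one, abs_of_pos (sub_pos.mpr hc1),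
        sum_const, card_univ, Fintype.card_fin, nsmul_eq_mul]
    refine le_of_mul_le_mul_left ?_ (sub_pos.mpr hc1)
    exact (one_sub_mul_sum_abs_le_of_eq_smul_vecMul_add hQ0 hQ1 hc0.le hRvec).trans_eq
      (hb.trans (mul_comm _ _))
  have herror : ∑ i, |R i - RN N i| ≤ c ^ (N + 1) * n := by
    have hdiff := sub_sum_range_smul_vecMul_pow hRvec N
    rw [← hRNvec] at hdiff
    simp only [← Pi.sub_apply, hdiff, Pi.smul_apply, smul_eq_mul, abs_mul,
      abs_of_pos (pow_pos hc0 _), ← mul_sum]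
    gcongr
    exact (sum_abs_vecMul_pow_le hQ0 hQ1 R _).trans hRnorm
  have hmarkov := (card_filter_le_abs_mul_le_sum_abs (R - RN N) ε).trans herror
  refine div_le_of_le_mul₀ n.cast_nonneg (by positivity) ?_
  rw [div_mul_eq_mul_div, le_div_iff₀ hε]
  simpa using hmarkov

/-- For `n ≥ 1`, `c ∈ (0,1)`, `Q` an `n × n` real substochastic matrix, `R` the
graph-normalized PageRank vector and `R^{(N)}` its `N`-th finite approximation, for every
`N ∈ ℕ` and `ε > 0`, the fraction of indices with truncation error at least `ε` satisfies
`(1/n) · #{i : R_i - R^{(N)}_i ≥ ε} ≤ c^{N+1}/ε`; i.e. for a uniformly chosen vertex `V_n`,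
`P(|R_{V_n} - R^{(N)}_{V_n}| ≥ ε) ≤ c^{N+1}/ε`. -/
theorem stmt_6 (n : ℕ) (hn : 1 ≤ n) (c : ℝ) (hc : c ∈ Set.Ioo (0 : ℝ) 1)
    (Q : Matrix (Fin n) (Fin n) ℝ)
    (hQ0 : ∀ j i, 0 ≤ Q j i) (hQ1 : ∀ j, ∑ i, Q j i ≤ 1)
    (R : Fin n → ℝ)
    (hR : ∀ i, R i = c * (∑ j, Q j i * R j) + (1 - c))
    (RN : ℕ → Fin n → ℝ)
    (hRN : ∀ N i, RN N i =
      (1 - c) * ∑ k ∈ Finset.range (N + 1), c ^ k * ∑ j, (Q ^ k) j i) :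
    ∀ (N : ℕ) (ε : ℝ), 0 < ε →
      ((Finset.univ.filter fun i : Fin n => ε ≤ |R i - RN N i|).card : ℝ) / (n : ℝ)
        ≤ c ^ (N + 1) / ε :=
  stmt_6_general n c hc Q hQ0 hQ1 R hR RN hRN
end

section
/- Let n ≥ 1, let c ∈ (0,1), and let Q be an n×n real substochastic matrix with graph-normalized PageRank vector R. Then for every i ∈ [n], R_i ≥ (1−c)·(1 + c·Σ_{j∈[n]} Q_{j,i}); in particular R_i > 1−c whenever the i-th column of Q is nonzero, and R_i ≥ 1−c always. -/
/-!
Right multiplication by a substochastic matrix does not increase the ℓ¹ mass of a nonnegative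
vector. The negative part of `R` satisfies `R⁻ ≤ c R⁻ Q` (the constant term `(1 - c) 𝟙` only
helps), hence `‖R⁻‖₁ ≤ c ‖R⁻‖₁` and `R ≥ 0`. Then `R ≥ 1 - c` entrywise, and substituting this
once more into the fixed-point equation gives `R_i ≥ (1 - c)(1 + c ∑_j Q_{j,i})`.
-/

namespace PageRank

variable {ι : Type*} [Fintype ι]

/-- The row-vector equation `R = R (c Q) + (1 - c) 𝟙`, written entrywise. -/
def IsPageRank (c : ℝ) (Q : Matrix ι ι ℝ) (R : ι → ℝ) : Prop :=
  ∀ i, R i = c * (∑ j, Q j i * R j) + (1 - c)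

theorem sum_sum_mul_le_sum {Q : Matrix ι ι ℝ} (hQ1 : ∀ j, ∑ i, Q j i ≤ 1)
    {w : ι → ℝ} (hw : ∀ j, 0 ≤ w j) : ∑ i, ∑ j, Q j i * w j ≤ ∑ j, w j :=
  calc ∑ i, ∑ j, Q j i * w j = ∑ j, w j * ∑ i, Q j i := by
        rw [Finset.sum_comm]
        simp only [Finset.mul_sum, mul_comm]
    _ ≤ ∑ j, w j * 1 := Finset.sum_le_sum fun j _ => mul_le_mul_of_nonneg_left (hQ1 j) (hw j)
    _ = ∑ j, w j := by simp only [mul_one]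

theorem eq_zero_of_le_const_mul_sum {Q : Matrix ι ι ℝ} (hQ1 : ∀ j, ∑ i, Q j i ≤ 1)
    {c : ℝ} (hc0 : 0 ≤ c) (hc1 : c < 1) {w : ι → ℝ} (hw : ∀ j, 0 ≤ w j)
    (h : ∀ i, w i ≤ c * ∑ j, Q j i * w j) : ∀ j, w j = 0 := by
  have hmass : ∑ j, w j ≤ c * ∑ j, w j :=
    calc ∑ i, w i ≤ ∑ i, c * ∑ j, Q j i * w j := Finset.sum_le_sum fun i _ => h i
      _ = c * ∑ i, ∑ j, Q j i * w j := (Finset.mul_sum _ _ _).symm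
      _ ≤ c * ∑ j, w j := mul_le_mul_of_nonneg_left (sum_sum_mul_le_sum hQ1 hw) hc0
  have hsum : ∑ j, w j = 0 :=
    le_antisymm (by nlinarith) (Finset.sum_nonneg fun j _ => hw j)
  exact congrFun ((Fintype.sum_eq_zero_iff_of_nonneg hw).mp hsum)

variable {c : ℝ} {Q : Matrix ι ι ℝ} {R : ι → ℝ}

theorem IsPageRank.negPart_le (hQ0 : ∀ j i, 0 ≤ Q j i) (hc0 : 0 ≤ c) (hc1 : c ≤ 1)
    (hR : IsPageRank c Q R) (i : ι) : (R i)⁻ ≤ c * ∑ j, Q j i * (R j)⁻ := by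
  have hsum : -∑ j, Q j i * (R j)⁻ ≤ ∑ j, Q j i * R j := by
    rw [← Finset.sum_neg_distrib]
    gcongr with j
    rw [← mul_neg]
    exact mul_le_mul_of_nonneg_left (neg_le.mp (neg_le_negPart _)) (hQ0 j i)
  have hrhs : 0 ≤ c * ∑ j, Q j i * (R j)⁻ :=
    mul_nonneg hc0 (Finset.sum_nonneg fun j _ => mul_nonneg (hQ0 j i) (negPart_nonneg _))
  refine max_le ?_ hrhs
  rw [hR i]
  nlinarith

theorem IsPageRank.nonneg (hQ0 : ∀ j i, 0 ≤ Q j i) (hQ1 : ∀ j, ∑ i, Q j i ≤ 1)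
    (hc0 : 0 ≤ c) (hc1 : c < 1) (hR : IsPageRank c Q R) (j : ι) : 0 ≤ R j :=
  negPart_eq_zero.mp <| eq_zero_of_le_const_mul_sum hQ1 hc0 hc1 (fun _ => negPart_nonneg _)
    (hR.negPart_le hQ0 hc0 hc1.le) j

theorem IsPageRank.one_sub_le (hQ0 : ∀ j i, 0 ≤ Q j i) (hc0 : 0 ≤ c) (hRnn : ∀ j, 0 ≤ R j)
    (hR : IsPageRank c Q R) (i : ι) : 1 - c ≤ R i := by
  have hsum : 0 ≤ ∑ j, Q j i * R j :=
    Finset.sum_nonneg fun j _ => mul_nonneg (hQ0 j i) (hRnn j)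
  rw [hR i]
  nlinarith

theorem IsPageRank.one_sub_mul_one_add_colSum_le (hQ0 : ∀ j i, 0 ≤ Q j i) (hc0 : 0 ≤ c)
    (hRnn : ∀ j, 0 ≤ R j) (hR : IsPageRank c Q R) (i : ι) :
    (1 - c) * (1 + c * ∑ j, Q j i) ≤ R i := by
  have hsum : (1 - c) * ∑ j, Q j i ≤ ∑ j, Q j i * R j := by
    rw [Finset.mul_sum]
    refine Finset.sum_le_sum fun j _ => ?_
    rw [mul_comm]
    exact mul_le_mul_of_nonneg_left (hR.one_sub_le hQ0 hc0 hRnn j) (hQ0 j i)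
  rw [hR i]
  nlinarith

end PageRank

open PageRank in
theorem stmt_9_general (n : ℕ) (c : ℝ) (hc : c ∈ Set.Ioo (0 : ℝ) 1)
    (Q : Matrix (Fin n) (Fin n) ℝ)
    (hQ0 : ∀ j i, 0 ≤ Q j i) (hQ1 : ∀ j, ∑ i, Q j i ≤ 1)
    (R : Fin n → ℝ)
    (hR : ∀ i, R i = c * (∑ j, Q j i * R j) + (1 - c)) :
    ∀ i, (1 - c) * (1 + c * ∑ j, Q j i) ≤ R i ∧
      ((∃ j, Q j i ≠ 0) → 1 - c < R i) ∧ 1 - c ≤ R i := by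
  obtain ⟨hc0, hc1⟩ := hc
  have hPR : IsPageRank c Q R := hR
  have hRnn := hPR.nonneg hQ0 hQ1 hc0.le hc1
  intro i
  have hbound := hPR.one_sub_mul_one_add_colSum_le hQ0 hc0.le hRnn i
  refine ⟨hbound, fun ⟨j, hj⟩ => ?_, hPR.one_sub_le hQ0 hc0.le hRnn i⟩
  have hcol : 0 < ∑ k, Q k i :=
    Finset.sum_pos' (fun k _ => hQ0 k i) ⟨j, Finset.mem_univ j, (hQ0 j i).lt_of_ne' hj⟩
  nlinarith [mul_pos (sub_pos.mpr hc1) (mul_pos hc0 hcol)]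

/-- For `n ≥ 1`, `c ∈ (0,1)`, `Q` an `n × n` real substochastic matrix with
graph-normalized PageRank vector `R`: for every `i`,
`R_i ≥ (1-c)(1 + c ∑_j Q_{j,i})`; in particular `R_i > 1-c` whenever the `i`-th column of
`Q` is nonzero, and `R_i ≥ 1-c` always. -/
theorem stmt_9 (n : ℕ) (hn : 1 ≤ n) (c : ℝ) (hc : c ∈ Set.Ioo (0 : ℝ) 1)
    (Q : Matrix (Fin n) (Fin n) ℝ)
    (hQ0 : ∀ j i, 0 ≤ Q j i) (hQ1 : ∀ j, ∑ i, Q j i ≤ 1)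
    (R : Fin n → ℝ)
    (hR : ∀ i, R i = c * (∑ j, Q j i * R j) + (1 - c)) :
    ∀ i, (1 - c) * (1 + c * ∑ j, Q j i) ≤ R i ∧
      ((∃ j, Q j i ≠ 0) → 1 - c < R i) ∧ 1 - c ≤ R i :=
  stmt_9_general n c hc Q hQ0 hQ1 R hR
end

section
/- Let c ∈ (0,1). For each n ∈ ℕ, let (X_{n,i})_{i∈[n]} and, for each N ∈ ℕ, (X^{(N)}_{n,i})_{i∈[n]} be nonnegative random variables on a common probability space with X^{(N)}_{n,i} ≤ X_{n,i} almost surely for all i, and E[(1/n)·Σ_{i∈[n]} (X_{n,i} − X^{(N)}_{n,i})] ≤ c^{N+1}. Let (Y^{(N)})_{N∈ℕ} and Y be nonnegative random variables on a probability space such that almost surely N ↦ Y^{(N)} is nondecreasing with limit Y, finite almost surely. Assume that for every N ∈ ℕ and every s > 0, the empirical fraction (1/n)·Σ_{i∈[n]} 1{X^{(N)}_{n,i} > s} converges in probability to P(Y^{(N)} > s) as n → ∞. Then for every r > 0 that is a continuity point of the distribution function of Y, the empirical fraction (1/n)·Σ_{i∈[n]} 1{X_{n,i} > r} converges in probability to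 P(Y > r) as n → ∞. -/
/-!
Compare `X` with its truncations `XN N`. Since `XN N ≤ X`, the empirical tail of `X` at `r` is at
least that of `XN N`, and it exceeds the empirical tail of `XN N` at `r - δ` by at most
`δ⁻¹` times the mean gap `(1/n) ∑ (X - XN N)`. The mean gap is small with high probability by
Markov's inequality and the bound `c ^ (N + 1)`. On the limit side, `P(YN N > r) ↑ P(Y > r)` by
monotone convergence, and `P(Y > r - δ) → P(Y > r)` as `δ ↓ 0` because `r` is not an atom of `Y`.
Choosing first `δ`, then `N`, squeezes the empirical tail of `X` around `P(Y > r)`.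
-/

open MeasureTheory Filter Topology Set
open scoped ENNReal

section Measure

variable {α : Type*} {mα : MeasurableSpace α} {μ : Measure α}

theorem tendsto_measure_setOf_lt_of_monotone {f : ℕ → α → ℝ} {g : α → ℝ}
    (h : ∀ᵐ x ∂μ, Monotone (fun n => f n x) ∧ Tendsto (fun n => f n x) atTop (𝓝 (g x)))
    (r : ℝ) : Tendsto (fun n => μ {x | r < f n x}) atTop (𝓝 (μ {x | r < g x})) := by
  set G := {x | Monotone (fun n => f n x) ∧ Tendsto (fun n => f n x) atTop (𝓝 (g x))}
  have hG : μ Gᶜ = 0 := ae_iff.mp h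
  have hmono : Monotone fun n => {x | r < f n x} ∩ G := fun m n hmn x ⟨hx, hxG⟩ =>
    ⟨hx.trans_le (hxG.1 hmn), hxG⟩
  have hunion : ⋃ n, {x | r < f n x} ∩ G = {x | r < g x} ∩ G := by
    ext x
    simp only [mem_iUnion, mem_inter_iff, mem_ofPred_eq]
    constructor
    · rintro ⟨n, hx, hxG⟩
      exact ⟨hx.trans_le (hxG.1.ge_of_tendsto hxG.2 n), hxG⟩
    · rintro ⟨hx, hxG⟩
      obtain ⟨n, hn⟩ := (hxG.2.eventually (eventually_gt_nhds hx)).exists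
      exact ⟨n, hn, hxG⟩
  simpa only [hunion, Function.comp_def, measure_inter_conull hG] using
    tendsto_measure_iUnion_atTop (μ := μ) hmono

theorem tendsto_measureReal_sub_lt_nhdsGT_zero [IsFiniteMeasure μ] {Y : α → ℝ}
    (hY : AEMeasurable Y μ) {r : ℝ} (hr : μ {x | Y x = r} = 0) :
    Tendsto (fun δ => μ.real {x | r - δ < Y x}) (𝓝[>] 0) (𝓝 (μ.real {x | r < Y x})) := by
  have hinter : ⋂ δ > (0 : ℝ), {x | r - δ < Y x} = {x | r ≤ Y x} := by
    ext x
    simp only [mem_iInter, mem_ofPred_eq, sub_lt_iff_lt_add, le_iff_forall_pos_lt_add]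
  have hatom : {x | r ≤ Y x} =ᵐ[μ] {x | r < Y x} := by
    have hunion : {x | r ≤ Y x} = {x | r < Y x} ∪ {x | Y x = r} := by
      ext x
      simp [le_iff_lt_or_eq, eq_comm]
    rw [hunion]
    exact union_ae_eq_left_of_ae_eq_empty (ae_eq_empty.mpr hr)
  have hlim := tendsto_measure_biInter_gt (μ := μ) (s := fun δ => {x | r - δ < Y x}) (a := 0)
    (fun δ _ => nullMeasurableSet_lt aemeasurable_const hY)
    (fun i j _ hij x hx => by simp only [mem_ofPred_eq] at hx ⊢; linarith)
    ⟨1, one_pos, measure_ne_top _ _⟩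
  rw [hinter, measure_congr hatom] at hlim
  exact (ENNReal.tendsto_toReal (measure_ne_top _ _)).comp hlim

theorem meas_ge_le_lintegral_ofReal_div {f : α → ℝ} (hf : AEMeasurable f μ) {θ : ℝ}
    (hθ : 0 < θ) :
    μ {x | θ ≤ f x} ≤ (∫⁻ x, ENNReal.ofReal (f x) ∂μ) / ENNReal.ofReal θ :=
  (measure_mono fun _ hx => ENNReal.ofReal_le_ofReal hx).trans
    (meas_ge_le_lintegral_div hf.ennreal_ofReal (ENNReal.ofReal_pos.mpr hθ).ne'
      ENNReal.ofReal_ne_top)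

end Measure

theorem ENNReal.tendsto_nhds_zero_of_forall_le_add {ι : Type*} {l : Filter ι} {u : ι → ℝ≥0∞}
    (h : ∀ ε > 0, ∃ v : ι → ℝ≥0∞, Tendsto v l (𝓝 0) ∧ ∀ i, u i ≤ v i + ε) :
    Tendsto u l (𝓝 0) := by
  refine ENNReal.tendsto_nhds_zero.mpr fun ε hε => ?_
  obtain ⟨v, hv, huv⟩ := h (ε / 2) (ENNReal.half_pos hε.ne')
  filter_upwards [hv.eventually (eventually_le_nhds (ENNReal.half_pos hε.ne'))] with i hi
  calc u i ≤ v i + ε / 2 := huv i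
    _ ≤ ε / 2 + ε / 2 := by gcongr
    _ = ε := ENNReal.add_halves ε

noncomputable def tailFraction {n : ℕ} (x : Fin n → ℝ) (r : ℝ) : ℝ :=
  (1 / (n : ℝ)) * ∑ i, if r < x i then 1 else 0

section TailFraction

variable {n : ℕ} {x x' : Fin n → ℝ}

theorem tailFraction_mono (h : x' ≤ x) (r : ℝ) : tailFraction x' r ≤ tailFraction x r := by
  unfold tailFraction
  gcongr with i
  split_ifs with h' hx <;> norm_num
  exact hx (h'.trans_le (h i))

theorem tailFraction_le_sub_add (h : x' ≤ x) {δ : ℝ} (hδ : 0 < δ) (r : ℝ) :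
    tailFraction x r ≤ tailFraction x' (r - δ) + (1 / (n : ℝ)) * (∑ i, (x i - x' i)) / δ := by
  unfold tailFraction
  rw [mul_div_assoc, Finset.sum_div, ← mul_add, ← Finset.sum_add_distrib]
  gcongr with i
  have hgap : 0 ≤ (x i - x' i) / δ := div_nonneg (sub_nonneg.mpr (h i)) hδ.le
  split_ifs with hx hx' <;> try linarith
  -- an entry of `x` above `r` whose truncation lies below `r - δ` was truncated by more than `δ`
  rw [zero_add, le_div_iff₀ hδ]
  linarith

theorem tailFraction_deviation (h : x' ≤ x) {r δ η p q q' : ℝ} (hδ : 0 < δ) (hη : 0 ≤ η)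
    (hq : p - η / 4 ≤ q) (hq' : q' ≤ p + η / 4) (hdev : η ≤ |tailFraction x r - p|) :
    η / 4 ≤ |tailFraction x' r - q| ∨ η / 4 ≤ |tailFraction x' (r - δ) - q'| ∨
      δ * η / 2 ≤ (1 / (n : ℝ)) * ∑ i, (x i - x' i) := by
  have hlower := tailFraction_mono h r
  have hupper := tailFraction_le_sub_add h hδ r
  rcases le_abs'.mp hdev with hbelow | habove
  · left
    rw [le_abs']
    left
    linarith
  · right
    by_contra! hsmall
    have : (1 / (n : ℝ)) * (∑ i, (x i - x' i)) / δ < η / 2 := by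
      rw [div_lt_iff₀ hδ]
      linarith
    linarith [le_abs_self (tailFraction x' (r - δ) - q'), hsmall.1]

end TailFraction

theorem measure_tailFraction_deviation_le {α : Type*} {mα : MeasurableSpace α} {μ : Measure α}
    {n : ℕ} {x x' : Fin n → α → ℝ} (h : ∀ i, x' i ≤ᵐ[μ] x i) {r δ η p q q' : ℝ} (hδ : 0 < δ)
    (hη : 0 ≤ η) (hq : p - η / 4 ≤ q) (hq' : q' ≤ p + η / 4) :
    μ {ω | η ≤ |tailFraction (x · ω) r - p|} ≤
      μ {ω | η / 4 ≤ |tailFraction (x' · ω) r - q|} +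
        μ {ω | η / 4 ≤ |tailFraction (x' · ω) (r - δ) - q'|} +
        μ {ω | δ * η / 2 ≤ (1 / (n : ℝ)) * ∑ i, (x i ω - x' i ω)} := by
  have hle : ∀ᵐ ω ∂μ, (x' · ω) ≤ (x · ω) := ae_all_iff.mpr h
  calc _ ≤ μ ({ω | η / 4 ≤ |tailFraction (x' · ω) r - q|} ∪
          {ω | η / 4 ≤ |tailFraction (x' · ω) (r - δ) - q'|} ∪
          {ω | δ * η / 2 ≤ (1 / (n : ℝ)) * ∑ i, (x i ω - x' i ω)}) :=
        measure_mono_ae <| hle.mono fun ω hω hdev =>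
          or_assoc.mpr (tailFraction_deviation hω hδ hη hq hq' hdev)
    _ ≤ _ := (measure_union_le _ _).trans (by gcongr; exact measure_union_le _ _)

theorem stmt_15_general (c : ℝ) (hc : c ∈ Set.Ioo (0 : ℝ) 1)
    (Ω : ℕ → Type*) [∀ n, MeasureSpace (Ω n)]
    (X : ∀ n, Fin n → Ω n → ℝ) (XN : ℕ → ∀ n, Fin n → Ω n → ℝ)
    (hXmeas : ∀ n i, Measurable (X n i)) (hXNmeas : ∀ N n i, Measurable (XN N n i))
    (hle : ∀ N n i, ∀ᵐ ω ∂(volume : Measure (Ω n)), XN N n i ω ≤ X n i ω)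
    (herr : ∀ (N : ℕ) (n : ℕ),
      ∫⁻ ω, ENNReal.ofReal ((1 / (n : ℝ)) * ∑ i, (X n i ω - XN N n i ω))
        ≤ ENNReal.ofReal (c ^ (N + 1)))
    (Ω' : Type*) [MeasureSpace Ω'] [IsProbabilityMeasure (volume : Measure Ω')]
    (Y : Ω' → ℝ) (YN : ℕ → Ω' → ℝ)
    (hYmeas : Measurable Y)
    (hmono : ∀ᵐ ω ∂(volume : Measure Ω'),
      Monotone (fun N => YN N ω) ∧ Tendsto (fun N => YN N ω) atTop (nhds (Y ω)))
    (hempconv : ∀ (N : ℕ) (s : ℝ), 0 < s → ∀ η : ℝ, 0 < η →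
      Tendsto (fun n =>
          (volume : Measure (Ω n)) {ω | η ≤
            |(1 / (n : ℝ)) * (∑ i, if s < XN N n i ω then (1 : ℝ) else 0) -
              ((volume : Measure Ω') {ω' | s < YN N ω'}).toReal|})
        atTop (nhds 0)) :
    ∀ r : ℝ, 0 < r → (volume : Measure Ω') {ω | Y ω = r} = 0 →
      ∀ η : ℝ, 0 < η →
        Tendsto (fun n =>
            (volume : Measure (Ω n)) {ω | η ≤
              |(1 / (n : ℝ)) * (∑ i, if r < X n i ω then (1 : ℝ) else 0) -
                ((volume : Measure Ω') {ω' | r < Y ω'}).toReal|})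
          atTop (nhds 0) := by
  intro r hr hcont η hη
  set p := (volume : Measure Ω').real {ω | r < Y ω}
  obtain ⟨δ, hYδ, hδ, hδr⟩ : ∃ δ, (volume : Measure Ω').real {ω | r - δ < Y ω} ≤ p + η / 4 ∧
      δ ∈ Ioo 0 r :=
    (((tendsto_measureReal_sub_lt_nhdsGT_zero hYmeas.aemeasurable hcont).eventually
      (eventually_le_nhds (by linarith))).and (Ioo_mem_nhdsGT hr)).exists
  have hYN : Tendsto (fun N => (volume : Measure Ω').real {ω | r < YN N ω}) atTop (𝓝 p) :=
    (ENNReal.tendsto_toReal (measure_ne_top _ _)).comp (tendsto_measure_setOf_lt_of_monotone hmono r)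
  have hgap : Tendsto (fun N : ℕ => ENNReal.ofReal (c ^ (N + 1)) / ENNReal.ofReal (δ * η / 2))
      atTop (𝓝 0) := by
    have hpow := (tendsto_pow_atTop_nhds_zero_of_lt_one hc.1.le hc.2).comp (tendsto_add_atTop_nat 1)
    simpa using ENNReal.Tendsto.div_const (ENNReal.tendsto_ofReal hpow)
      (Or.inr (ENNReal.ofReal_pos.mpr (by positivity)).ne')
  refine ENNReal.tendsto_nhds_zero_of_forall_le_add fun ε hε => ?_
  obtain ⟨N, hNr, hNgap⟩ := ((hYN.eventually (eventually_ge_nhds (by linarith : p - η / 4 < p))).and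
    (hgap.eventually (eventually_le_nhds hε))).exists
  have hNδ : (volume : Measure Ω').real {ω | r - δ < YN N ω} ≤ p + η / 4 := by
    refine le_trans (ENNReal.toReal_mono (measure_ne_top _ _) (measure_mono_ae ?_)) hYδ
    filter_upwards [hmono] with ω hω hlt
    exact hlt.trans_le (hω.1.ge_of_tendsto hω.2 N)
  have hemp := (hempconv N r hr (η / 4) (by positivity)).add
    (hempconv N (r - δ) (by linarith) (η / 4) (by positivity))
  rw [add_zero] at hemp
  refine ⟨_, hemp, fun n => ?_⟩
  have hmarkov := meas_ge_le_lintegral_ofReal_div (μ := (volume : Measure (Ω n)))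
    (by fun_prop : Measurable fun ω => (1 / (n : ℝ)) * ∑ i, (X n i ω - XN N n i ω)).aemeasurable
    (by positivity : 0 < δ * η / 2)
  calc _ ≤ _ + _ + _ := measure_tailFraction_deviation_le (hle N n) hδ hη.le hNr hNδ
    _ ≤ _ := add_le_add le_rfl
      (hmarkov.trans ((ENNReal.div_le_div_right (herr N n) _).trans hNgap))

/-- Let `c ∈ (0,1)`. For each `n`, let `(X_{n,i})_{i∈[n]}` and
`(X^{(N)}_{n,i})_{i∈[n]}` be nonnegative random variables on a common space with
`X^{(N)}_{n,i} ≤ X_{n,i}` a.s. and `E[(1/n) ∑_i (X_{n,i} - X^{(N)}_{n,i})] ≤ c^{N+1}`.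
Let `Y^{(N)} ↑ Y` almost surely (nonnegative, `Y` finite a.s.). If for every `N` and
`s > 0` the empirical fraction `(1/n) ∑_i 1{X^{(N)}_{n,i} > s}` converges in probability
to `P(Y^{(N)} > s)`, then for every continuity point `r > 0` of the law of `Y`, the
empirical fraction `(1/n) ∑_i 1{X_{n,i} > r}` converges in probability to `P(Y > r)`. -/
theorem stmt_15 (c : ℝ) (hc : c ∈ Set.Ioo (0 : ℝ) 1)
    (Ω : ℕ → Type*) [∀ n, MeasureSpace (Ω n)]
    [∀ n, IsProbabilityMeasure (volume : Measure (Ω n))]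
    (X : ∀ n, Fin n → Ω n → ℝ) (XN : ℕ → ∀ n, Fin n → Ω n → ℝ)
    (hXmeas : ∀ n i, Measurable (X n i)) (hXNmeas : ∀ N n i, Measurable (XN N n i))
    (hXpos : ∀ n i, ∀ᵐ ω ∂(volume : Measure (Ω n)), 0 ≤ X n i ω)
    (hXNpos : ∀ N n i, ∀ᵐ ω ∂(volume : Measure (Ω n)), 0 ≤ XN N n i ω)
    (hle : ∀ N n i, ∀ᵐ ω ∂(volume : Measure (Ω n)), XN N n i ω ≤ X n i ω)
    (herr : ∀ (N : ℕ) (n : ℕ),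
      ∫⁻ ω, ENNReal.ofReal ((1 / (n : ℝ)) * ∑ i, (X n i ω - XN N n i ω))
        ≤ ENNReal.ofReal (c ^ (N + 1)))
    (Ω' : Type*) [MeasureSpace Ω'] [IsProbabilityMeasure (volume : Measure Ω')]
    (Y : Ω' → ℝ) (YN : ℕ → Ω' → ℝ)
    (hYmeas : Measurable Y) (hYNmeas : ∀ N, Measurable (YN N))
    (hYpos : ∀ᵐ ω ∂(volume : Measure Ω'), 0 ≤ Y ω)
    (hYNpos : ∀ N, ∀ᵐ ω ∂(volume : Measure Ω'), 0 ≤ YN N ω)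
    (hmono : ∀ᵐ ω ∂(volume : Measure Ω'),
      Monotone (fun N => YN N ω) ∧ Tendsto (fun N => YN N ω) atTop (nhds (Y ω)))
    (hempconv : ∀ (N : ℕ) (s : ℝ), 0 < s → ∀ η : ℝ, 0 < η →
      Tendsto (fun n =>
          (volume : Measure (Ω n)) {ω | η ≤
            |(1 / (n : ℝ)) * (∑ i, if s < XN N n i ω then (1 : ℝ) else 0) -
              ((volume : Measure Ω') {ω' | s < YN N ω'}).toReal|})
        atTop (nhds 0)) :
    ∀ r : ℝ, 0 < r → (volume : Measure Ω') {ω | Y ω = r} = 0 →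
      ∀ η : ℝ, 0 < η →
        Tendsto (fun n =>
            (volume : Measure (Ω n)) {ω | η ≤
              |(1 / (n : ℝ)) * (∑ i, if r < X n i ω then (1 : ℝ) else 0) -
                ((volume : Measure Ω') {ω' | r < Y ω'}).toReal|})
          atTop (nhds 0) :=
  stmt_15_general c hc Ω X XN hXmeas hXNmeas hle herr Ω' Y YN hYmeas hmono hempconv
end

section
/- Let n ≥ 1, let c ∈ (0,1), and let (Ω, F, P) be a probability space. Let A : Ω → (n×n real matrices) be measurable such that almost surely all entries of A are nonnegative and every row sum of A is at most c. Let B : Ω → ℝ^n be measurable and integrable with B_j ≥ 0 almost surely and E[B_j] = 1−c for every j ∈ [n], and suppose B is independent of A. Define the random row vectors R(ω) = Σ_{k=0}^∞ B(ω) A(ω)^k and, for N ∈ ℕ, R^{(N)}(ω) = Σ_{k=0}^{N} B(ω) A(ω)^k. Then for every N ∈ ℕ, E[(1/n)·Σ_{i∈[n]} (R_i − R^{(N)}_i)] ≤ c^{N+1}. -/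
/-!
Pathwise, nonnegativity and the row-sum bound give `∑ᵢ (B Aᵏ)ᵢ ≤ cᵏ ∑ⱼ Bⱼ`, so the tail
`∑ᵢ (R - R^{(N)})ᵢ` is at most the geometric tail `c^{N+1} (1 - c)⁻¹ ∑ⱼ Bⱼ`. Taking expectations,
`E[∑ⱼ Bⱼ] = n (1 - c)` turns this into `n c^{N+1}`.
-/

open MeasureTheory Filter

/-- Matrices over a measurable space carry the (entrywise) product σ-algebra. -/
local instance (priority := 100) matrixMeasurableSpace {m n α : Type*} [MeasurableSpace α] :
    MeasurableSpace (Matrix m n α) :=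
  inferInstanceAs (MeasurableSpace (m → n → α))

open Finset Matrix

namespace Matrix

variable {ι α : Type*} [Fintype ι] [DecidableEq ι] [Semiring α] [PartialOrder α]
  [IsOrderedRing α] {A : Matrix ι ι α} {c : α}

lemma sum_pow_apply_le (hA : ∀ i j, 0 ≤ A i j) (hc : 0 ≤ c) (hrow : ∀ i, ∑ j, A i j ≤ c)
    (k : ℕ) (i : ι) : ∑ j, (A ^ k) i j ≤ c ^ k := by
  induction k generalizing i with
  | zero => simp [one_apply]
  | succ k ih =>
    calc ∑ j, (A ^ (k + 1)) i j = ∑ l, (A ^ k) i l * ∑ j, A l j := by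
          simp only [pow_succ, mul_apply, mul_sum]
          exact sum_comm
      _ ≤ ∑ l, (A ^ k) i l * c :=
          sum_le_sum fun l _ => mul_le_mul_of_nonneg_left (hrow l) (pow_apply_nonneg hA k i l)
      _ = (∑ l, (A ^ k) i l) * c := (sum_mul ..).symm
      _ ≤ c ^ (k + 1) := by
          rw [pow_succ]
          exact mul_le_mul_of_nonneg_right (ih i) hc

lemma vecMul_pow_apply_nonneg {v : ι → α} (hv : ∀ i, 0 ≤ v i) (hA : ∀ i j, 0 ≤ A i j)
    (k : ℕ) (j : ι) : 0 ≤ (v ᵥ* A ^ k) j :=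
  sum_nonneg fun i _ => mul_nonneg (hv i) (pow_apply_nonneg hA k i j)

lemma sum_vecMul_pow_le {v : ι → α} (hv : ∀ i, 0 ≤ v i) (hA : ∀ i j, 0 ≤ A i j)
    (hc : 0 ≤ c) (hrow : ∀ i, ∑ j, A i j ≤ c) (k : ℕ) :
    ∑ j, (v ᵥ* A ^ k) j ≤ (∑ i, v i) * c ^ k :=
  calc ∑ j, (v ᵥ* A ^ k) j = ∑ i, v i * ∑ j, (A ^ k) i j := by
        simp only [vecMul, dotProduct, mul_sum]
        exact sum_comm
    _ ≤ ∑ i, v i * c ^ k :=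
        sum_le_sum fun i _ => mul_le_mul_of_nonneg_left (sum_pow_apply_le hA hc hrow k i) (hv i)
    _ = (∑ i, v i) * c ^ k := (sum_mul ..).symm

end Matrix

lemma tsum_sub_sum_range_le_of_le_geometric {g : ℕ → ℝ} {c S : ℝ} (hg0 : ∀ k, 0 ≤ g k)
    (hc0 : 0 ≤ c) (hc1 : c < 1) (hg : ∀ k, g k ≤ S * c ^ k) (N : ℕ) :
    ∑' k, g k - ∑ k ∈ range (N + 1), g k ≤ S * c ^ (N + 1) * (1 - c)⁻¹ := by
  have hgeom := summable_geometric_of_lt_one hc0 hc1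
  have hsum : Summable g := .of_nonneg_of_le hg0 hg (hgeom.mul_left S)
  have htail : ∑' k, g k - ∑ k ∈ range (N + 1), g k = ∑' k, g (k + (N + 1)) := by
    rw [← hsum.sum_add_tsum_nat_add (N + 1)]
    ring
  calc ∑' k, g k - ∑ k ∈ range (N + 1), g k = ∑' k, g (k + (N + 1)) := htail
    _ ≤ ∑' k, S * c ^ (N + 1) * c ^ k := by
        refine (hsum.comp_injective (add_left_injective _)).tsum_le_tsum (fun k => ?_)
          (hgeom.mul_left _)
        simpa only [pow_add, mul_comm, mul_left_comm, mul_assoc] using hg (k + (N + 1))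
    _ = S * c ^ (N + 1) * (1 - c)⁻¹ := by rw [tsum_mul_left, tsum_geometric_of_lt_one hc0 hc1]

lemma sum_tsum_sub_sum_range_eq {ι : Type*} [Fintype ι] {f : ℕ → ι → ℝ} (hf : Summable f)
    (N : ℕ) :
    ∑ i, ((∑' k, f k) i - (∑ k ∈ range (N + 1), f k) i) =
      ∑' k, ∑ i, f k i - ∑ k ∈ range (N + 1), ∑ i, f k i := by
  have hfi : ∀ i, Summable fun k => f k i := Pi.summable.mp hf
  simp only [sum_sub_distrib, tsum_apply hf, Finset.sum_apply,
    (Summable.tsum_finsetSum fun i _ => hfi i).symm]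
  rw [sum_comm]

lemma sum_tail_vecMul_pow_le {ι : Type*} [Fintype ι] [DecidableEq ι] {A : Matrix ι ι ℝ}
    {v : ι → ℝ} {c : ℝ} (hv : ∀ i, 0 ≤ v i) (hA : ∀ i j, 0 ≤ A i j) (hc0 : 0 ≤ c) (hc1 : c < 1)
    (hrow : ∀ i, ∑ j, A i j ≤ c) (N : ℕ) :
    ∑ i, ((∑' k, v ᵥ* A ^ k) i - (∑ k ∈ range (N + 1), v ᵥ* A ^ k) i) ≤
      (∑ i, v i) * c ^ (N + 1) * (1 - c)⁻¹ := by
  have hmass := sum_vecMul_pow_le hv hA hc0 hrow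
  have hentry : ∀ k j, (v ᵥ* A ^ k) j ≤ (∑ i, v i) * c ^ k := fun k j =>
    (single_le_sum (fun j _ => vecMul_pow_apply_nonneg hv hA k j) (mem_univ j)).trans
      (hmass k)
  have hsum : Summable fun k => v ᵥ* A ^ k := Pi.summable.mpr fun j =>
    .of_nonneg_of_le (fun k => vecMul_pow_apply_nonneg hv hA k j) (fun k => hentry k j)
      ((summable_geometric_of_lt_one hc0 hc1).mul_left _)
  rw [sum_tsum_sub_sum_range_eq hsum]
  exact tsum_sub_sum_range_le_of_le_geometric
    (fun k => sum_nonneg fun j _ => vecMul_pow_apply_nonneg hv hA k j) hc0 hc1 hmass N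

lemma lintegral_ofReal_le_ofReal_integral {Ω : Type*} [MeasurableSpace Ω] {μ : Measure Ω}
    {f g : Ω → ℝ} (hfg : f ≤ᵐ[μ] g) (hg : Integrable g μ) (hg0 : 0 ≤ᵐ[μ] g) :
    ∫⁻ ω, ENNReal.ofReal (f ω) ∂μ ≤ ENNReal.ofReal (∫ ω, g ω ∂μ) := by
  rw [ofReal_integral_eq_lintegral_ofReal hg hg0]
  exact lintegral_mono_ae (hfg.mono fun _ h => ENNReal.ofReal_le_ofReal h)

theorem stmt_16_general (n : ℕ) (hn : 1 ≤ n) (c : ℝ) (hc : c ∈ Set.Ioo (0 : ℝ) 1)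
    (Ω : Type*) [MeasureSpace Ω]
    (A : Ω → Matrix (Fin n) (Fin n) ℝ)
    (hA0 : ∀ᵐ ω ∂(volume : Measure Ω), ∀ j i, 0 ≤ A ω j i)
    (hA1 : ∀ᵐ ω ∂(volume : Measure Ω), ∀ j, ∑ i, A ω j i ≤ c)
    (B : Ω → Fin n → ℝ)
    (hBint : ∀ j, Integrable (fun ω => B ω j))
    (hB0 : ∀ᵐ ω ∂(volume : Measure Ω), ∀ j, 0 ≤ B ω j)
    (hBexp : ∀ j, ∫ ω, B ω j = 1 - c)
    (R : Ω → Fin n → ℝ)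
    (hR : ∀ ω, R ω = ∑' k : ℕ, Matrix.vecMul (B ω) (A ω ^ k))
    (RN : ℕ → Ω → Fin n → ℝ)
    (hRN : ∀ N ω, RN N ω = ∑ k ∈ Finset.range (N + 1), Matrix.vecMul (B ω) (A ω ^ k)) :
    ∀ N : ℕ,
      ∫⁻ ω, ENNReal.ofReal ((1 / (n : ℝ)) * ∑ i, (R ω i - RN N ω i))
        ≤ ENNReal.ofReal (c ^ (N + 1)) := by
  intro N
  obtain ⟨hc0, hc1⟩ := hc
  have hn0 : (n : ℝ) ≠ 0 := by positivity
  set K : ℝ := c ^ (N + 1) * (1 - c)⁻¹ / n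
  set g : Ω → ℝ := fun ω => (∑ j, B ω j) * K
  have hK : 0 ≤ K := by have := hc1.le; positivity
  have hg_int : Integrable g := (integrable_finsetSum _ fun j _ => hBint j).mul_const K
  have hg_nonneg : 0 ≤ᵐ[volume] g := hB0.mono fun ω hω =>
    mul_nonneg (sum_nonneg fun j _ => hω j) hK
  have hbound : ∀ᵐ ω ∂(volume : Measure Ω), (1 / (n : ℝ)) * ∑ i, (R ω i - RN N ω i) ≤ g ω := by
    filter_upwards [hA0, hA1, hB0] with ω hAω hrowω hBω
    rw [hR ω, hRN N ω]
    calc (1 / (n : ℝ)) * ∑ i, ((∑' k, B ω ᵥ* A ω ^ k) i - (∑ k ∈ range (N + 1), B ω ᵥ* A ω ^ k) i)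
        ≤ (1 / (n : ℝ)) * ((∑ j, B ω j) * c ^ (N + 1) * (1 - c)⁻¹) := by
          gcongr
          exact sum_tail_vecMul_pow_le hBω hAω hc0.le hc1 hrowω N
      _ = g ω := by ring
  have hg_integral : ∫ ω, g ω = c ^ (N + 1) := by
    simp only [g, integral_mul_const, integral_finsetSum _ fun j _ => hBint j, hBexp, sum_const,
      card_univ, Fintype.card_fin, nsmul_eq_mul, K]
    field_simp [(sub_pos.mpr hc1).ne']
  simpa only [hg_integral] using lintegral_ofReal_le_ofReal_integral hbound hg_int hg_nonneg

/-- Let `n ≥ 1`, `c ∈ (0,1)`, and `(Ω, F, P)` a probability space. Let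
`A : Ω → ℝ^{n×n}` be measurable with, almost surely, nonnegative entries and row sums at
most `c`. Let `B : Ω → ℝ^n` be measurable, componentwise integrable, nonnegative a.s.,
with `E[B_j] = 1 - c` for every `j`, and independent of `A`. Define
`R(ω) = ∑_{k=0}^∞ B(ω) A(ω)^k` and `R^{(N)}(ω) = ∑_{k=0}^N B(ω) A(ω)^k`. Then for every
`N`, `E[(1/n) ∑_i (R_i - R^{(N)}_i)] ≤ c^{N+1}`. -/
theorem stmt_16 (n : ℕ) (hn : 1 ≤ n) (c : ℝ) (hc : c ∈ Set.Ioo (0 : ℝ) 1)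
    (Ω : Type*) [MeasureSpace Ω] [IsProbabilityMeasure (volume : Measure Ω)]
    (A : Ω → Matrix (Fin n) (Fin n) ℝ) (hAmeas : Measurable A)
    (hA0 : ∀ᵐ ω ∂(volume : Measure Ω), ∀ j i, 0 ≤ A ω j i)
    (hA1 : ∀ᵐ ω ∂(volume : Measure Ω), ∀ j, ∑ i, A ω j i ≤ c)
    (B : Ω → Fin n → ℝ) (hBmeas : Measurable B)
    (hBint : ∀ j, Integrable (fun ω => B ω j))
    (hB0 : ∀ᵐ ω ∂(volume : Measure Ω), ∀ j, 0 ≤ B ω j)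
    (hBexp : ∀ j, ∫ ω, B ω j = 1 - c)
    (hindep : ProbabilityTheory.IndepFun B A)
    (R : Ω → Fin n → ℝ)
    (hR : ∀ ω, R ω = ∑' k : ℕ, Matrix.vecMul (B ω) (A ω ^ k))
    (RN : ℕ → Ω → Fin n → ℝ)
    (hRN : ∀ N ω, RN N ω = ∑ k ∈ Finset.range (N + 1), Matrix.vecMul (B ω) (A ω ^ k)) :
    ∀ N : ℕ,
      ∫⁻ ω, ENNReal.ofReal ((1 / (n : ℝ)) * ∑ i, (R ω i - RN N ω i))
        ≤ ENNReal.ofReal (c ^ (N + 1)) :=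
  stmt_16_general n hn c hc Ω A hA0 hA1 B hBint hB0 hBexp R hR RN hRN
end
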